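/- The transversal Hadamard operator H_g^{⊗7} acts as the logical Hadamard on the Steane code: H_g^{⊗7}|0_L⟩ = (|0_L⟩ + |1_L⟩)/√2 and H_g^{⊗7}|1_L⟩ = (|0_L⟩ − |1_L⟩)/√2. -/

import Mathlib

/-!
On basis states, `H_g^{⊗7} |v⟩ = 2^{-7/2} Σ_w (-1)^{v·w} |w⟩`. The even-weight Hamming codewords
form the dual code, the simplex code `{u Hmat : u ∈ F₂³}`, and the odd-weight ones are its
translate by the all-ones vector `𝟙`. Summing the character `w ↦ (-1)^{v·w}` over the simplex
code gives `8` if `Hmat v = 0` and `0` otherwise; over the translate it picks up the factor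
`(-1)^{v·𝟙} = (-1)^{wt v}`, the sign with which a codeword `v` occurs in `|0_L⟩ - |1_L⟩`.
-/

/-- The 3×7 parity-check matrix of the [7,4] Hamming code over F₂. -/
def Hmat : Matrix (Fin 3) (Fin 7) (ZMod 2) :=
  !![1,0,1,0,1,0,1; 0,1,1,0,0,1,1; 0,0,0,1,1,1,1]

/-- The Steane logical zero state `|0_L⟩ = (1/√8) Σ_{v∈C, wt(v) even} |v⟩`. -/
noncomputable def ket0L : (Fin 7 → ZMod 2) → ℂ := fun w =>
  if Hmat.mulVec w = 0 ∧ Even (hammingNorm w) then (Real.sqrt 8 : ℂ)⁻¹ else 0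

/-- The Steane logical one state `|1_L⟩ = (1/√8) Σ_{v∈C, wt(v) odd} |v⟩`. -/
noncomputable def ket1L : (Fin 7 → ZMod 2) → ℂ := fun w =>
  if Hmat.mulVec w = 0 ∧ Odd (hammingNorm w) then (Real.sqrt 8 : ℂ)⁻¹ else 0

/-- The 7-fold tensor product of single-qubit operators. -/
noncomputable def tensorOp (A : Fin 7 → Matrix (ZMod 2) (ZMod 2) ℂ) :
    ((Fin 7 → ZMod 2) → ℂ) → ((Fin 7 → ZMod 2) → ℂ) :=
  fun ψ v => ∑ w : Fin 7 → ZMod 2, (∏ i, A i (v i) (w i)) * ψ w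

/-- The Hadamard gate `H_g = (1/√2)[[1,1],[1,−1]]`, indexed by `ZMod 2`. -/
noncomputable def Hgate : Matrix (ZMod 2) (ZMod 2) ℂ :=
  Matrix.of fun a b => (Real.sqrt 2 : ℂ)⁻¹ * (if a = 1 ∧ b = 1 then -1 else 1)

open Finset Matrix

lemma AddChar.map_sum_eq_prod {ι A M : Type*} [AddCommMonoid A] [CommMonoid M]
    (ψ : AddChar A M) (s : Finset ι) (f : ι → A) : ψ (∑ i ∈ s, f i) = ∏ i ∈ s, ψ (f i) := by
  induction s using Finset.cons_induction with
  | empty => simp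
  | cons i s _ ih => rw [sum_cons, prod_cons, AddChar.map_add_eq_mul, ih]

lemma sum_mul_ite_eq_mul_sum_of_injective {α β R : Type*} [Fintype α] [Fintype β]
    [CommSemiring R] {g : α → β} (hg : Function.Injective g) {p : β → Prop} [DecidablePred p]
    (hp : ∀ b, p b ↔ ∃ a, g a = b) (f : β → R) (c : R) :
    ∑ b, f b * (if p b then c else 0) = c * ∑ a, f (g a) := by
  classical
  have hfilter : univ.filter p = univ.image g := by ext b; simp [hp]
  rw [mul_sum, ← sum_image (f := fun b => c * f b) hg.injOn, ← hfilter, sum_filter]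
  simp_rw [mul_ite, mul_zero, mul_comm]

def parityChar : AddChar (ZMod 2) ℂ where
  toFun a := (-1) ^ a.val
  map_zero_eq_one' := rfl
  map_add_eq_mul' a b := by rw [← pow_add, ZMod.val_add, ← neg_one_pow_eq_pow_mod_two]

@[simp] lemma parityChar_apply (a : ZMod 2) : parityChar a = (-1) ^ a.val := rfl

lemma parityChar_eq_one_iff {a : ZMod 2} : parityChar a = 1 ↔ a = 0 := by
  obtain rfl | rfl : a = 0 ∨ a = 1 := by revert a; decide
  · simp
  · rw [parityChar_apply, ZMod.val_one]; norm_num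

lemma sum_parityChar_dotProduct {ι : Type*} [Fintype ι] [DecidableEq ι] (x : ι → ZMod 2) :
    ∑ u, parityChar (x ⬝ᵥ u) = if x = 0 then 2 ^ Fintype.card ι else 0 := by
  let ψ := parityChar.compAddMonoidHom (AddMonoidHom.mk' (x ⬝ᵥ ·) (dotProduct_add x))
  have hψ : ψ = 0 ↔ x = 0 := by
    refine ⟨fun h => funext fun i => ?_, fun h => ?_⟩
    · simpa [ψ, -parityChar_apply, parityChar_eq_one_iff] using
        DFunLike.congr_fun h (Pi.single i 1)
    · ext u; simp [ψ, h]
  simpa [ψ, hψ, Fintype.card_fun] using ψ.sum_eq_ite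

lemma sum_parityChar_dotProduct_vecMul {ι κ : Type*} [Fintype ι] [Fintype κ] [DecidableEq κ]
    (G : Matrix κ ι (ZMod 2)) (v : ι → ZMod 2) :
    ∑ u, parityChar (v ⬝ᵥ u ᵥ* G) = if G *ᵥ v = 0 then 2 ^ Fintype.card κ else 0 := by
  simp_rw [dotProduct_comm v, ← dotProduct_mulVec, dotProduct_comm _ (G *ᵥ v)]
  exact sum_parityChar_dotProduct _

lemma sum_parityChar_dotProduct_vecMul_add {ι κ : Type*} [Fintype ι] [Fintype κ] [DecidableEq κ]
    (G : Matrix κ ι (ZMod 2)) (a v : ι → ZMod 2) :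
    ∑ u, parityChar (v ⬝ᵥ (u ᵥ* G + a)) =
      parityChar (v ⬝ᵥ a) * if G *ᵥ v = 0 then 2 ^ Fintype.card κ else 0 := by
  simp_rw [dotProduct_add, AddChar.map_add_eq_mul, ← sum_mul,
    sum_parityChar_dotProduct_vecMul, mul_comm]

lemma natCast_hammingNorm {ι : Type*} [Fintype ι] (v : ι → ZMod 2) :
    (hammingNorm v : ZMod 2) = ∑ i, v i := by
  rw [hammingNorm, natCast_card_filter]
  refine sum_congr rfl fun i _ => ?_
  obtain h | h : v i = 0 ∨ v i = 1 := by generalize v i = a; revert a; decide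
  all_goals simp [h]

lemma parityChar_dotProduct_one {ι : Type*} [Fintype ι] (v : ι → ZMod 2) :
    parityChar (v ⬝ᵥ 1) = (-1) ^ hammingNorm v := by
  rw [dotProduct_one, ← natCast_hammingNorm, parityChar_apply, ZMod.val_natCast,
    ← neg_one_pow_eq_pow_mod_two]

lemma Hgate_apply (a b : ZMod 2) : Hgate a b = (Real.sqrt 2 : ℂ)⁻¹ * parityChar (a * b) := by
  obtain rfl | rfl : a = 0 ∨ a = 1 := by revert a; decide
  all_goals obtain rfl | rfl : b = 0 ∨ b = 1 := by revert b; decide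
  all_goals simp [Hgate, ZMod.val_one]

lemma tensorOp_Hgate_apply (ψ : (Fin 7 → ZMod 2) → ℂ) (v : Fin 7 → ZMod 2) :
    tensorOp (fun _ => Hgate) ψ v =
      (Real.sqrt 2 : ℂ)⁻¹ ^ 7 * ∑ w, parityChar (v ⬝ᵥ w) * ψ w := by
  simp_rw [tensorOp, Hgate_apply, prod_mul_distrib, prod_const, card_univ, Fintype.card_fin,
    dotProduct, AddChar.map_sum_eq_prod, mul_sum, mul_assoc]

set_option maxRecDepth 10000 in
lemma mulVec_Hmat_eq_zero_and_even_iff (w : Fin 7 → ZMod 2) :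
    Hmat *ᵥ w = 0 ∧ Even (hammingNorm w) ↔ ∃ u, u ᵥ* Hmat = w := by
  revert w; decide

set_option maxRecDepth 10000 in
lemma mulVec_Hmat_eq_zero_and_odd_iff (w : Fin 7 → ZMod 2) :
    Hmat *ᵥ w = 0 ∧ Odd (hammingNorm w) ↔ ∃ u, u ᵥ* Hmat + 1 = w := by
  revert w; decide

lemma vecMul_Hmat_injective : Function.Injective (· ᵥ* Hmat) := by
  unfold Function.Injective; decide

lemma sum_mul_ket0L (f : (Fin 7 → ZMod 2) → ℂ) :
    ∑ w, f w * ket0L w = (Real.sqrt 8 : ℂ)⁻¹ * ∑ u, f (u ᵥ* Hmat) :=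
  sum_mul_ite_eq_mul_sum_of_injective vecMul_Hmat_injective mulVec_Hmat_eq_zero_and_even_iff f _

lemma sum_mul_ket1L (f : (Fin 7 → ZMod 2) → ℂ) :
    ∑ w, f w * ket1L w = (Real.sqrt 8 : ℂ)⁻¹ * ∑ u, f (u ᵥ* Hmat + 1) :=
  sum_mul_ite_eq_mul_sum_of_injective ((add_left_injective 1).comp vecMul_Hmat_injective)
    mulVec_Hmat_eq_zero_and_odd_iff f _

lemma ket0L_add_ket1L_apply (v : Fin 7 → ZMod 2) :
    ket0L v + ket1L v = if Hmat *ᵥ v = 0 then (Real.sqrt 8 : ℂ)⁻¹ else 0 := by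
  rcases Nat.even_or_odd (hammingNorm v) with h | h
  · simp [ket0L, ket1L, h, Nat.not_odd_iff_even.mpr h]
  · simp [ket0L, ket1L, h, Nat.not_even_iff_odd.mpr h]

lemma ket0L_sub_ket1L_apply (v : Fin 7 → ZMod 2) :
    ket0L v - ket1L v =
      if Hmat *ᵥ v = 0 then (Real.sqrt 8 : ℂ)⁻¹ * (-1) ^ hammingNorm v else 0 := by
  rcases Nat.even_or_odd (hammingNorm v) with h | h
  · simp [ket0L, ket1L, h, h.neg_one_pow, Nat.not_odd_iff_even.mpr h]
  · simp [ket0L, ket1L, h, h.neg_one_pow, Nat.not_even_iff_odd.mpr h]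
    split_ifs <;> simp

lemma inv_sqrt_two_pow_seven_mul_eight :
    (Real.sqrt 2 : ℂ)⁻¹ ^ 7 * 2 ^ 3 = (Real.sqrt 2 : ℂ)⁻¹ := by
  have hsq : (Real.sqrt 2 : ℂ) ^ 2 = 2 := by exact_mod_cast Real.sq_sqrt zero_le_two
  have hne : (Real.sqrt 2 : ℂ) ≠ 0 := by exact_mod_cast Real.sqrt_ne_zero'.mpr two_pos
  rw [← hsq]
  field_simp

/-- The transversal Hadamard operator `H_g^{⊗7}` acts as the logical Hadamard on
the Steane code: `H_g^{⊗7}|0_L⟩ = (|0_L⟩ + |1_L⟩)/√2` and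
`H_g^{⊗7}|1_L⟩ = (|0_L⟩ − |1_L⟩)/√2`. -/
theorem transversal_H_is_logical_H :
    tensorOp (fun _ => Hgate) ket0L = (Real.sqrt 2 : ℂ)⁻¹ • (ket0L + ket1L) ∧
    tensorOp (fun _ => Hgate) ket1L = (Real.sqrt 2 : ℂ)⁻¹ • (ket0L - ket1L) := by
  have hc := inv_sqrt_two_pow_seven_mul_eight
  constructor <;> funext v
  · rw [tensorOp_Hgate_apply, sum_mul_ket0L, sum_parityChar_dotProduct_vecMul, Pi.smul_apply,
      Pi.add_apply, ket0L_add_ket1L_apply, Fintype.card_fin, smul_eq_mul]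
    split_ifs
    · linear_combination (Real.sqrt 8 : ℂ)⁻¹ * hc
    · simp
  · rw [tensorOp_Hgate_apply, sum_mul_ket1L, sum_parityChar_dotProduct_vecMul_add,
      parityChar_dotProduct_one, Pi.smul_apply, Pi.sub_apply, ket0L_sub_ket1L_apply,
      Fintype.card_fin, smul_eq_mul]
    split_ifs
    · linear_combination (Real.sqrt 8 : ℂ)⁻¹ * (-1) ^ hammingNorm v * hc
    · simp
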